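/- arXiv:1711.05874 — 3 statements merged into one kernel-verified Lean document; each statement's English description precedes it below -/
import Mathlib

section
/- Let Γ be a geometric distance-regular graph with diameter D, valency k and smallest eigenvalue θ_min = −k/(a_1+1), and let (u_i)_{i=0}^D be the standard sequence associated with θ_min. Then every clique C of Γ with a_1+2 vertices is a completely regular code with covering radius D−1, and for every 0 ≤ i ≤ D−1 and every vertex x with d(x,C) = i, writing γ = |Γ_i(x) ∩ C|, one has γ·u_i + (a_1+2−γ)·u_{i+1} = 0. -/
open Finset

/-- The intersection number `a_i := k - b_i - c_i`, where `k = b 0` is the valency. -/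
def drgA (b c : ℕ → ℕ) (i : ℕ) : ℕ := b 0 - b i - c i

/-- `G` is a distance-regular graph with diameter `D` and intersection numbers
`b i`, `c i` (`0 ≤ i ≤ D`, with `b D = 0`, `c 0 = 0`): `G` is connected of diameter `D`,
and for any vertices `x, y` at distance `i`, `y` has exactly `c i` neighbours at distance
`i - 1` from `x` and exactly `b i` neighbours at distance `i + 1` from `x`. -/
def IsDRG {V : Type*} [Fintype V] (G : SimpleGraph V) [DecidableRel G.Adj]
    (D : ℕ) (b c : ℕ → ℕ) : Prop :=
  G.Connected ∧
  (∀ x y : V, G.dist x y ≤ D) ∧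
  (∃ x y : V, G.dist x y = D) ∧
  b D = 0 ∧ c 0 = 0 ∧
  ∀ i, i ≤ D → ∀ x y : V, G.dist x y = i →
    (Finset.univ.filter (fun z => G.Adj y z ∧ G.dist x z = i - 1)).card = c i ∧
    (Finset.univ.filter (fun z => G.Adj y z ∧ G.dist x z = i + 1)).card = b i

/-- `θ` is an eigenvalue of the adjacency matrix of `G`. -/
def IsAdjEigenvalue {V : Type*} [Fintype V] (G : SimpleGraph V) [DecidableRel G.Adj]
    (θ : ℝ) : Prop :=
  ∃ v : V → ℝ, v ≠ 0 ∧ (G.adjMatrix ℝ).mulVec v = θ • v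

/-- `θ` is the smallest eigenvalue of the adjacency matrix of `G`. -/
def IsSmallestAdjEigenvalue {V : Type*} [Fintype V] (G : SimpleGraph V) [DecidableRel G.Adj]
    (θ : ℝ) : Prop :=
  IsAdjEigenvalue G θ ∧ ∀ μ : ℝ, IsAdjEigenvalue G μ → θ ≤ μ

/-- The multiplicity of `θ` as an eigenvalue of the adjacency matrix of `G`,
i.e. the dimension of the `θ`-eigenspace. -/
noncomputable def adjMult {V : Type*} [Fintype V] (G : SimpleGraph V) [DecidableRel G.Adj]
    (θ : ℝ) : ℕ :=
  Module.finrank ℝ (Module.End.eigenspace ((G.adjMatrix ℝ).mulVecLin) θ)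

/-- `u` is the standard sequence of the eigenvalue `θ`:
`u 0 = 1`, `u 1 = θ / k`, and `c i * u (i-1) + a i * u i + b i * u (i+1) = θ * u i`
for `1 ≤ i ≤ D - 1`. -/
def IsStdSeq (D : ℕ) (b c : ℕ → ℕ) (θ : ℝ) (u : ℕ → ℝ) : Prop :=
  u 0 = 1 ∧ u 1 = θ / (b 0 : ℝ) ∧
  ∀ i, 1 ≤ i → i ≤ D - 1 →
    (c i : ℝ) * u (i - 1) + (drgA b c i : ℝ) * u i + (b i : ℝ) * u (i + 1) = θ * u i

/-- A Delsarte clique: a clique of size `1 - k / θmin`. -/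
def IsDelsarteClique {V : Type*} (G : SimpleGraph V) (k : ℕ) (θmin : ℝ)
    (C : Finset V) : Prop :=
  G.IsClique (C : Set V) ∧ (C.card : ℝ) = 1 - (k : ℝ) / θmin

/-- `G` is geometric with respect to the collection `𝒞` of Delsarte cliques:
every member of `𝒞` is a Delsarte clique and every edge lies in exactly one member of `𝒞`. -/
def IsGeometricWith {V : Type*} (G : SimpleGraph V) (k : ℕ) (θmin : ℝ)
    (𝒞 : Set (Finset V)) : Prop :=
  (∀ C ∈ 𝒞, IsDelsarteClique G k θmin C) ∧
  ∀ x y : V, G.Adj x y → ∃! C : Finset V, C ∈ 𝒞 ∧ x ∈ C ∧ y ∈ C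

/-- The distance `d(x, C) = min { d(x,c) : c ∈ C }` from a vertex to a set of vertices. -/
noncomputable def distToSet {V : Type*} (G : SimpleGraph V) (x : V) (C : Finset V) : ℕ :=
  sInf ((fun c => G.dist x c) '' (C : Set V))

/-- `C` is a completely regular code: the number of neighbours in
`C_j = {y : d(y,C) = j}` of a vertex `x` with `d(x,C) = i` depends only on `i` and `j`,
i.e. the distance partition of `C` is equitable. -/
def IsCompletelyRegularCode {V : Type*} [Fintype V] (G : SimpleGraph V) [DecidableRel G.Adj]
    (C : Finset V) : Prop :=
  ∀ i j : ℕ, ∃ f : ℕ, ∀ x : V, distToSet G x C = i →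
    (Finset.univ.filter (fun y => G.Adj x y ∧ distToSet G y C = j)).card = f

/-- `G` is non-bipartite (contains an odd cycle), i.e. not 2-colorable. -/
def NonBipartite {V : Type*} (G : SimpleGraph V) : Prop := ¬ G.Colorable 2

/-- A set `S` of vertices is strongly closed: any vertex `z` with
`d(x,z) + d(z,y) ≤ d(x,y) + 1` for some `x, y ∈ S` belongs to `S`. -/
def IsStronglyClosed {V : Type*} (G : SimpleGraph V) (S : Set V) : Prop :=
  ∀ x ∈ S, ∀ y ∈ S, ∀ z : V, G.dist x z + G.dist z y ≤ G.dist x y + 1 → z ∈ S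

/-- `G` is `m`-bounded: for every `1 ≤ i ≤ m` and all vertices `x, y` at distance `i`
there is a strongly closed set containing `x` and `y` inducing a connected subgraph
of diameter `i`. -/
def IsMBounded {V : Type*} [Fintype V] (G : SimpleGraph V) (m : ℕ) : Prop :=
  ∀ i, 1 ≤ i → i ≤ m → ∀ x y : V, G.dist x y = i →
    ∃ S : Set V, IsStronglyClosed G S ∧ x ∈ S ∧ y ∈ S ∧
      (G.induce S).Connected ∧
      (∀ u v : S, (G.induce S).dist u v ≤ i) ∧ (∃ u v : S, (G.induce S).dist u v = i)

/-- The vector `C_j = Σ_{z ∈ Γ(x) ∩ Γ_{j-1}(y)} φ z - Σ_{w ∈ Γ_{j-1}(x) ∩ Γ(y)} φ w`. -/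
noncomputable def Cvec {V : Type*} [Fintype V] (G : SimpleGraph V) [DecidableRel G.Adj]
    {N : ℕ} (φ : V → EuclideanSpace ℝ (Fin N)) (j : ℕ) (x y : V) :
    EuclideanSpace ℝ (Fin N) :=
  (∑ z ∈ Finset.univ.filter (fun z => G.Adj x z ∧ G.dist y z = j - 1), φ z)
    - ∑ w ∈ Finset.univ.filter (fun w => G.dist x w = j - 1 ∧ G.Adj y w), φ w

/-!
Put `f x = ∑_{y ∈ C} u (d(x,y))`. Since `u` is the standard sequence of an eigenvalue `θ`, each
`x ↦ u (d(z,x))` is a `θ`-eigenvector, hence so is `f`, and for any `θ`-eigenvector `v` the sum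
`∑_w u (d(z,w)) v w` is a multiple of `v z` (sum `v` over the spheres around `z`). As
`|C| = a₁ + 2` and `u₁ = θ/k = -1/(a₁+1)`, `f` vanishes on `C`; therefore `‖f‖² = 0` and `f = 0`.

For `x` at distance `i` from `C` every vertex of `C` lies at distance `i` or `i + 1` from `x`, so
`f x = 0` is the identity `γ uᵢ + (a₁ + 2 - γ) uᵢ₊₁ = 0`. The standard sequence has no two
consecutive zeros, so this identity forces `uᵢ ≠ uᵢ₊₁`, `uᵢ ≠ 0` and `γ < a₁ + 2`; hence the
covering radius is at most `D - 1`, and `γ` depends only on `i`. Double counting the paths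
`x ~ y → C` then shows that the number of neighbours of `x` at each distance from `C` depends
only on `i` as well.
-/

namespace SimpleGraph

variable {V : Type*} {G : SimpleGraph V} {x y : V}

theorem Connected.exists_adj_dist_add_one_eq (hconn : G.Connected) (hne : x ≠ y) :
    ∃ z, G.Adj x z ∧ G.dist z y + 1 = G.dist x y := by
  obtain ⟨p, hp⟩ := hconn.exists_walk_length_eq_dist x y
  cases p with
  | nil => exact absurd rfl hne
  | @cons _ z _ hxz q =>
    refine ⟨z, hxz, le_antisymm ?_ ?_⟩
    · simpa [← hp] using dist_le q
    · have := hconn.dist_triangle (u := x) (v := z) (w := y)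
      rw [dist_eq_one_iff_adj.mpr hxz] at this
      omega

theorem Connected.exists_dist_eq_and_dist_eq (hconn : G.Connected) (x y : V) {i : ℕ}
    (hi : i ≤ G.dist x y) : ∃ z, G.dist x z = i ∧ G.dist z y + i = G.dist x y := by
  induction i with
  | zero => exact ⟨x, dist_self, rfl⟩
  | succ i ih =>
    obtain ⟨z, hxz, hzy⟩ := ih (by omega)
    have hne : z ≠ y := by rintro rfl; simp at hzy; omega
    obtain ⟨w, hzw, hwy⟩ := hconn.exists_adj_dist_add_one_eq hne
    have := hconn.dist_triangle (u := x) (v := w) (w := y)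
    rcases hzw.diff_dist_adj (u := x) with h | h | h <;> refine ⟨w, ?_, ?_⟩ <;> omega

variable [Fintype V]

theorem Connected.filter_dist_eq_zero (hconn : G.Connected) (x : V) :
    ({y | G.dist x y = 0} : Finset V) = {x} := by
  ext y
  simp [hconn.dist_eq_zero_iff, eq_comm]

variable [DecidableRel G.Adj]

theorem sum_adj_comp_dist {M : Type*} [AddCommMonoid M] (g : ℕ → M) (z x : V) :
    ∑ y ∈ {y | G.Adj x y}, g (G.dist z y) =
      #{y | G.Adj x y ∧ G.dist z y + 1 = G.dist z x} • g (G.dist z x - 1) +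
      #{y | G.Adj x y ∧ G.dist z y = G.dist z x} • g (G.dist z x) +
      #{y | G.Adj x y ∧ G.dist z y = G.dist z x + 1} • g (G.dist z x + 1) := by
  set j := G.dist z x
  have split : ∀ y ∈ ({y | G.Adj x y} : Finset V), g (G.dist z y) =
      ((if G.dist z y + 1 = j then g (j - 1) else 0) + (if G.dist z y = j then g j else 0)) +
        (if G.dist z y = j + 1 then g (j + 1) else 0) := by
    intro y hy
    have := (mem_filter.mp hy).2.diff_dist_adj (u := z)
    split_ifs <;> (try simp only [zero_add, add_zero]) <;> first | omega | congr 1 <;> omega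
  rw [sum_congr rfl split, sum_add_distrib, sum_add_distrib]
  simp only [sum_ite, sum_const_zero, add_zero, sum_const, filter_filter]

theorem sum_adj_eq_of_adjMatrix_mulVec_eq {θ : ℝ} {v : V → ℝ}
    (hv : (G.adjMatrix ℝ).mulVec v = θ • v) (x : V) : ∑ y ∈ {y | G.Adj x y}, v y = θ * v x := by
  simpa [adjMatrix_mulVec_apply, neighborFinset_eq_filter] using congrFun hv x

end SimpleGraph

section DistToSet

variable {V : Type*} {G : SimpleGraph V} {C : Finset V} {x y : V} {i : ℕ}

theorem distToSet_le_dist (hy : y ∈ C) : distToSet G x C ≤ G.dist x y :=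
  Nat.sInf_le ⟨y, hy, rfl⟩

theorem exists_mem_dist_eq_distToSet (hC : C.Nonempty) (x : V) :
    ∃ y ∈ C, G.dist x y = distToSet G x C :=
  Nat.sInf_mem (hC.to_set.image _) |>.imp fun _ ⟨hy, h⟩ => ⟨hy, h⟩

theorem card_filter_dist_distToSet_pos (hC : C.Nonempty) (x : V) :
    0 < #{y ∈ C | G.dist x y = distToSet G x C} := by
  obtain ⟨y, hy, hxy⟩ := exists_mem_dist_eq_distToSet (G := G) hC x
  exact card_pos.mpr ⟨y, mem_filter.mpr ⟨hy, hxy⟩⟩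

theorem distToSet_le_of_adj (hconn : G.Connected) (hC : C.Nonempty) (hxy : G.Adj x y) :
    distToSet G y C ≤ distToSet G x C + 1 := by
  obtain ⟨z, hz, hxz⟩ := exists_mem_dist_eq_distToSet (G := G) hC x
  have := hconn.dist_triangle (u := y) (v := x) (w := z)
  rw [G.dist_eq_one_iff_adj.mpr hxy.symm] at this
  have := distToSet_le_dist (G := G) (x := y) hz
  omega

theorem exists_adj_distToSet_eq (hconn : G.Connected) (hC : C.Nonempty)
    (hx : distToSet G x C = i + 1) : ∃ z, G.Adj x z ∧ distToSet G z C = i := by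
  obtain ⟨y, hy, hxy⟩ := exists_mem_dist_eq_distToSet (G := G) hC x
  obtain ⟨z, hxz, hzy⟩ := hconn.exists_adj_dist_add_one_eq (x := x) (y := y)
    (by rintro rfl; simp at hxy; omega)
  have := distToSet_le_dist (G := G) (x := z) hy
  have := distToSet_le_of_adj hconn hC hxz.symm
  exact ⟨z, hxz, by omega⟩

theorem card_adj_distToSet_eq_zero [Fintype V] [DecidableRel G.Adj] (hconn : G.Connected)
    (hC : C.Nonempty) (hx : distToSet G x C = i) {j : ℕ} (hj : j + 1 < i ∨ i + 1 < j) :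
    #{y | G.Adj x y ∧ distToSet G y C = j} = 0 := by
  refine card_eq_zero.mpr (filter_eq_empty_iff.mpr fun y _ ⟨hxy, hy⟩ => ?_)
  have := distToSet_le_of_adj hconn hC hxy
  have := distToSet_le_of_adj hconn hC hxy.symm
  omega

namespace SimpleGraph.IsClique

variable (hconn : G.Connected) (hC : G.IsClique (C : Set V))
include hC

theorem sum_comp_dist_of_mem [DecidableEq V] (hx : x ∈ C) (g : ℕ → ℝ) :
    ∑ y ∈ C, g (G.dist x y) = g 0 + (#C - 1 : ℝ) * g 1 := by
  rw [← add_sum_erase C _ hx, G.dist_self, sum_congr rfl fun y hy => ?_, sum_const,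
    card_erase_of_mem hx, nsmul_eq_mul, Nat.cast_sub (card_pos.mpr ⟨x, hx⟩), Nat.cast_one]
  rw [G.dist_eq_one_iff_adj.mpr (hC hx (mem_of_mem_erase hy) (ne_of_mem_erase hy).symm)]

include hconn

theorem dist_le_distToSet_add_one (hy : y ∈ C) : G.dist x y ≤ distToSet G x C + 1 := by
  obtain ⟨z, hz, hxz⟩ := exists_mem_dist_eq_distToSet (G := G) ⟨y, hy⟩ x
  have := hconn.dist_triangle (u := x) (v := z) (w := y)
  have : G.dist z y ≤ 1 := by
    rcases eq_or_ne z y with rfl | hne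
    · simp
    · exact (G.dist_eq_one_iff_adj.mpr (hC hz hy hne)).le
  omega

theorem filter_not_dist_eq (hx : distToSet G x C = i) :
    {y ∈ C | ¬G.dist x y = i} = {y ∈ C | G.dist x y = i + 1} := by
  refine filter_congr fun y hy => ?_
  have := distToSet_le_dist (G := G) (x := x) hy
  have := hC.dist_le_distToSet_add_one hconn (x := x) hy
  omega

theorem card_filter_dist_add_card_filter_dist (hx : distToSet G x C = i) :
    #{y ∈ C | G.dist x y = i} + #{y ∈ C | G.dist x y = i + 1} = #C := by
  rw [← hC.filter_not_dist_eq hconn hx, card_filter_add_card_filter_not]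

theorem sum_comp_dist_eq (hx : distToSet G x C = i) (g : ℕ → ℝ) :
    ∑ y ∈ C, g (G.dist x y) =
      #{y ∈ C | G.dist x y = i} * g i + #{y ∈ C | G.dist x y = i + 1} * g (i + 1) := by
  have level : ∀ l, ∑ y ∈ C with G.dist x y = l, g (G.dist x y) =
      #{y ∈ C | G.dist x y = l} * g l := fun l => by
    rw [sum_congr rfl fun y hy => congrArg g (mem_filter.mp hy).2, sum_const, nsmul_eq_mul]
  rw [← sum_filter_add_sum_filter_not C (fun y => G.dist x y = i),
    hC.filter_not_dist_eq hconn hx, level, level]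

theorem card_mul_add_card_mul_eq_zero {u : ℕ → ℝ} (hf : ∑ y ∈ C, u (G.dist x y) = 0)
    (hx : distToSet G x C = i) :
    #{y ∈ C | G.dist x y = i} * u i + #{y ∈ C | G.dist x y = i + 1} * u (i + 1) = 0 :=
  hC.sum_comp_dist_eq hconn hx u ▸ hf

end SimpleGraph.IsClique

end DistToSet

namespace IsDRG

variable {V : Type*} [Fintype V] {G : SimpleGraph V} [DecidableRel G.Adj] {D : ℕ}
  {b c : ℕ → ℕ} (h : IsDRG G D b c) {θ : ℝ} {u : ℕ → ℝ} {v : V → ℝ} {x z : V} {i j : ℕ}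
include h

theorem connected : G.Connected := h.1

theorem dist_le (x y : V) : G.dist x y ≤ D := h.2.1 x y

theorem b_diam : b D = 0 := h.2.2.2.1

theorem c_zero : c 0 = 0 := h.2.2.2.2.1

theorem exists_dist_eq_diam : ∃ x y, G.dist x y = D := h.2.2.1

theorem card_adj_dist_add_one (hzx : G.dist z x = j) :
    #{y | G.Adj x y ∧ G.dist z y = j + 1} = b j :=
  (h.2.2.2.2.2 j (hzx ▸ h.dist_le z x) z x hzx).2

theorem card_adj_dist_add_one_eq (hzx : G.dist z x = j) :
    #{y | G.Adj x y ∧ G.dist z y + 1 = j} = c j := by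
  cases j with
  | zero => simp [h.c_zero]
  | succ j => simpa using (h.2.2.2.2.2 (j + 1) (hzx ▸ h.dist_le z x) z x hzx).1

theorem card_adj : #{y | G.Adj x y} = b 0 := by
  simpa using h.card_adj_dist_add_one (z := x) (x := x) G.dist_self

theorem card_adj_dist_eq (hzx : G.dist z x = j) :
    #{y | G.Adj x y ∧ G.dist z y = j} = drgA b c j := by
  have := G.sum_adj_comp_dist (fun _ => 1) z x
  simp only [sum_const, smul_eq_mul, mul_one, hzx] at this
  rw [h.card_adj_dist_add_one_eq hzx, h.card_adj_dist_add_one hzx, h.card_adj] at this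
  unfold drgA
  omega

theorem sum_adj_comp_dist {M : Type*} [AddCommMonoid M] (g : ℕ → M) (z x : V) :
    ∑ y ∈ {y | G.Adj x y}, g (G.dist z y) =
      c (G.dist z x) • g (G.dist z x - 1) + drgA b c (G.dist z x) • g (G.dist z x) +
        b (G.dist z x) • g (G.dist z x + 1) := by
  rw [G.sum_adj_comp_dist, h.card_adj_dist_add_one_eq rfl, h.card_adj_dist_eq rfl,
    h.card_adj_dist_add_one rfl]

theorem b_pos (hi : i < D) : 0 < b i := by
  obtain ⟨x, y, hxy⟩ := h.exists_dist_eq_diam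
  obtain ⟨z, hxz, hzy⟩ := h.connected.exists_dist_eq_and_dist_eq x y (i := i) (by omega)
  obtain ⟨w, hzw, hwy⟩ := h.connected.exists_adj_dist_add_one_eq (x := z) (y := y)
    (by rintro rfl; simp at hzy; omega)
  have := h.connected.dist_triangle (u := x) (v := w) (w := y)
  have := hzw.diff_dist_adj (u := x)
  rw [← h.card_adj_dist_add_one hxz, card_pos]
  exact ⟨w, mem_filter.mpr ⟨mem_univ w, hzw, by omega⟩⟩

theorem exists_dist_eq (x : V) (hi : i ≤ D) : ∃ y, G.dist x y = i := by
  induction i with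
  | zero => exact ⟨x, G.dist_self⟩
  | succ i ih =>
    obtain ⟨y, hxy⟩ := ih (by omega)
    have := h.card_adj_dist_add_one hxy ▸ h.b_pos (i := i) (by omega)
    obtain ⟨z, hz⟩ := card_pos.mp this
    exact ⟨z, (mem_filter.mp hz).2.2⟩

theorem c_pos (hi0 : i ≠ 0) (hi : i ≤ D) : 0 < c i := by
  obtain ⟨x, -, -⟩ := h.exists_dist_eq_diam
  obtain ⟨y, hxy⟩ := h.exists_dist_eq x hi
  obtain ⟨w, hyw, hwx⟩ := h.connected.exists_adj_dist_add_one_eq (x := y) (y := x)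
    (by rintro rfl; simp at hxy; omega)
  rw [G.dist_comm (u := w), G.dist_comm (u := y), hxy] at hwx
  rw [← h.card_adj_dist_add_one_eq hxy, card_pos]
  exact ⟨w, mem_filter.mpr ⟨mem_univ w, hyw, hwx⟩⟩

theorem card_sphere_mul_b (x : V) (i : ℕ) :
    #{y | G.dist x y = i} * b i = #{y | G.dist x y = i + 1} * c (i + 1) := by
  refine card_mul_eq_card_mul G.Adj (fun y hy => ?_) (fun w hw => ?_)
  · rw [mem_filter] at hy
    rw [← h.card_adj_dist_add_one hy.2, bipartiteAbove, filter_filter]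
    simp only [and_comm]
  · rw [mem_filter] at hw
    rw [← h.card_adj_dist_add_one_eq hw.2, bipartiteBelow, filter_filter]
    congr 1
    ext y
    simp only [mem_filter, mem_univ, true_and, G.adj_comm y w, and_comm, Nat.add_right_cancel_iff]

theorem sum_sphere_recurrence (hv : (G.adjMatrix ℝ).mulVec v = θ • v) (x : V) (i : ℕ) :
    θ * ∑ y ∈ {y | G.dist x y = i + 1}, v y =
      c (i + 2) * ∑ y ∈ {y | G.dist x y = i + 2}, v y +
        drgA b c (i + 1) * ∑ y ∈ {y | G.dist x y = i + 1}, v y +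
          b i * ∑ y ∈ {y | G.dist x y = i}, v y := by
  let g : ℕ → ℝ := fun l => if l = i + 1 then 1 else 0
  have count : ∀ w, ∑ y ∈ {y | G.Adj w y}, g (G.dist x y) =
      (if G.dist x w = i + 2 then (c (i + 2) : ℝ) else 0) +
        (if G.dist x w = i + 1 then (drgA b c (i + 1) : ℝ) else 0) +
          (if G.dist x w = i then (b i : ℝ) else 0) := by
    intro w
    rw [h.sum_adj_comp_dist]
    simp only [g, nsmul_eq_mul, mul_ite, mul_one, mul_zero]
    split_ifs <;> first | omega | simp_all
  calc θ * ∑ y ∈ {y | G.dist x y = i + 1}, v y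
      = ∑ y ∈ {y | G.dist x y = i + 1}, ∑ w ∈ {w | G.Adj y w}, v w := by
        rw [mul_sum]
        exact sum_congr rfl fun y _ => (G.sum_adj_eq_of_adjMatrix_mulVec_eq hv y).symm
    _ = ∑ w, v w * ∑ y ∈ {y | G.Adj w y}, g (G.dist x y) := by
        simp only [g, sum_filter, mul_sum, mul_ite, mul_one, mul_zero]
        rw [sum_comm]
        refine sum_congr rfl fun y _ => ?_
        split_ifs <;> simp [*, G.adj_comm]
    _ = _ := by
        simp only [count, mul_add, mul_ite, mul_zero, sum_add_distrib, ← sum_filter, ← sum_mul]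
        ring

theorem sum_sphere_eq (hD : 0 < D) (hu : IsStdSeq D b c θ u)
    (hv : (G.adjMatrix ℝ).mulVec v = θ • v) (x : V) (hi : i ≤ D) :
    ∑ y ∈ {y | G.dist x y = i}, v y = #{y | G.dist x y = i} * u i * v x := by
  induction i using Nat.twoStepInduction with
  | zero => simp [h.connected.filter_dist_eq_zero, hu.1]
  | one =>
    have hk : (b 0 : ℝ) ≠ 0 := Nat.cast_ne_zero.mpr (h.b_pos hD).ne'
    simp only [SimpleGraph.dist_eq_one_iff_adj, h.card_adj, hu.2.1,
      G.sum_adj_eq_of_adjMatrix_mulVec_eq hv]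
    field_simp
  | more n ih₀ ih₁ =>
    have hc : (c (n + 2) : ℝ) ≠ 0 := Nat.cast_ne_zero.mpr (h.c_pos (by omega) hi).ne'
    have hrec := h.sum_sphere_recurrence hv x n
    rw [ih₀ (by omega), ih₁ (by omega)] at hrec
    have hu_rec := hu.2.2 (n + 1) (by omega) (by omega)
    rw [Nat.add_sub_cancel] at hu_rec
    have hk₀ := congrArg (Nat.cast : ℕ → ℝ) (h.card_sphere_mul_b x n)
    have hk₁ := congrArg (Nat.cast : ℕ → ℝ) (h.card_sphere_mul_b x (n + 1))
    push_cast at hk₀ hk₁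
    apply mul_left_cancel₀ hc
    linear_combination -hrec - (#{y | G.dist x y = n + 1} * v x : ℝ) * hu_rec
      - u n * v x * hk₀ + u (n + 2) * v x * hk₁

/-- `IsStdSeq` prescribes the recurrence only below `D`; at `D` it is forced by `θ` being an
eigenvalue, through the sphere recurrence around a vertex where the eigenvector is nonzero. -/
theorem stdSeq_recurrence_diam (hD : 0 < D) (hθ : IsAdjEigenvalue G θ)
    (hu : IsStdSeq D b c θ u) :
    c D * u (D - 1) + drgA b c D * u D = θ * u D := by
  obtain ⟨v, hv0, hv⟩ := hθ
  obtain ⟨z, hz⟩ := Function.ne_iff.mp hv0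
  obtain ⟨E, rfl⟩ : ∃ E, D = E + 1 := ⟨D - 1, by omega⟩
  have hrec := h.sum_sphere_recurrence hv z E
  have hfar : ({y | G.dist z y = E + 2} : Finset V) = ∅ :=
    filter_eq_empty_iff.mpr fun y _ => by have := h.dist_le z y; omega
  rw [hfar, sum_empty, h.sum_sphere_eq hD hu hv z le_rfl,
    h.sum_sphere_eq hD hu hv z (by omega)] at hrec
  have hk := congrArg (Nat.cast : ℕ → ℝ) (h.card_sphere_mul_b z E)
  push_cast at hk
  have hkD : (#{y | G.dist z y = E + 1} : ℝ) ≠ 0 := by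
    obtain ⟨y, hy⟩ := h.exists_dist_eq z le_rfl
    exact Nat.cast_ne_zero.mpr (card_ne_zero_of_mem (mem_filter.mpr ⟨mem_univ y, hy⟩))
  apply mul_left_cancel₀ (mul_ne_zero hkD hz)
  rw [Nat.add_sub_cancel]
  linear_combination -hrec - u E * v z * hk

/-- At `j = 0` the junk value `u (0 - 1)` is harmless, being multiplied by `c 0 = 0`. -/
theorem stdSeq_recurrence (hD : 0 < D) (hθ : IsAdjEigenvalue G θ) (hu : IsStdSeq D b c θ u)
    (hj : j ≤ D) : c j * u (j - 1) + drgA b c j * u j + b j * u (j + 1) = θ * u j := by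
  rcases Nat.eq_zero_or_pos j with rfl | hj0
  · have hk : (b 0 : ℝ) ≠ 0 := Nat.cast_ne_zero.mpr (h.b_pos hD).ne'
    simp [h.c_zero, drgA, hu.1, hu.2.1, mul_div_cancel₀ θ hk]
  rcases hj.lt_or_eq with hjD | rfl
  · exact hu.2.2 j hj0 (by omega)
  · rw [h.b_diam, Nat.cast_zero, zero_mul, add_zero]
    exact h.stdSeq_recurrence_diam hD hθ hu

theorem adjMatrix_mulVec_stdSeq (hD : 0 < D) (hθ : IsAdjEigenvalue G θ)
    (hu : IsStdSeq D b c θ u) (z : V) :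
    (G.adjMatrix ℝ).mulVec (fun x => u (G.dist z x)) = θ • fun x => u (G.dist z x) := by
  ext x
  rw [SimpleGraph.adjMatrix_mulVec_apply, SimpleGraph.neighborFinset_eq_filter,
    h.sum_adj_comp_dist, Pi.smul_apply, smul_eq_mul,
    ← h.stdSeq_recurrence hD hθ hu (h.dist_le z x)]
  simp only [nsmul_eq_mul]

theorem sum_stdSeq_mul_eq (hD : 0 < D) (hu : IsStdSeq D b c θ u)
    (hv : (G.adjMatrix ℝ).mulVec v = θ • v) (z : V) :
    ∑ w, u (G.dist z w) * v w =
      (∑ i ∈ range (D + 1), #{y | G.dist z y = i} * u i ^ 2) * v z := by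
  rw [← sum_fiberwise_of_maps_to (g := G.dist z) (t := range (D + 1))
    (fun w _ => mem_range.mpr (Nat.lt_succ_of_le (h.dist_le z w))), sum_mul]
  refine sum_congr rfl fun i hi => ?_
  rw [sum_congr rfl fun w hw => by rw [(mem_filter.mp hw).2], ← mul_sum,
    h.sum_sphere_eq hD hu hv z (Nat.le_of_lt_succ (mem_range.mp hi))]
  ring

/-- `f x = ∑_{y ∈ C} u (d(x,y))` is a `θ`-eigenvector, and by `sum_stdSeq_mul_eq` its squared
norm is a linear combination of its values on `C`. -/
theorem sum_stdSeq_eq_zero (hD : 0 < D) (hθ : IsAdjEigenvalue G θ) (hu : IsStdSeq D b c θ u)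
    {C : Finset V} (hC : ∀ x ∈ C, ∑ y ∈ C, u (G.dist x y) = 0) (x : V) :
    ∑ y ∈ C, u (G.dist x y) = 0 := by
  let f : V → ℝ := fun x => ∑ y ∈ C, u (G.dist x y)
  have hf : (G.adjMatrix ℝ).mulVec f = θ • f := by
    have : f = ∑ y ∈ C, fun x => u (G.dist y x) := by ext; simp [f, G.dist_comm]
    rw [this, Matrix.mulVec_sum, smul_sum]
    exact sum_congr rfl fun y _ => h.adjMatrix_mulVec_stdSeq hD hθ hu y
  have hsq : ∑ w, f w * f w = 0 :=
    calc ∑ w, f w * f w = ∑ y ∈ C, ∑ w, u (G.dist y w) * f w := by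
          simp only [f, sum_mul]
          rw [sum_comm]
          simp only [G.dist_comm]
      _ = 0 := sum_eq_zero fun y hy => by
          rw [h.sum_stdSeq_mul_eq hD hu hf y]
          exact mul_eq_zero_of_right _ (hC y hy)
  exact (sum_mul_self_eq_zero_iff _ f).mp hsq x (mem_univ x)

theorem stdSeq_ne_zero_or_ne_zero (hu : IsStdSeq D b c θ u) (hj : j + 1 ≤ D) :
    u j ≠ 0 ∨ u (j + 1) ≠ 0 := by
  induction j with
  | zero => exact .inl (hu.1 ▸ one_ne_zero)
  | succ j ih =>
    by_contra! hzero
    have hrec := hu.2.2 (j + 1) (by omega) (by omega)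
    rw [Nat.add_sub_cancel, hzero.1, hzero.2] at hrec
    have hc : (c (j + 1) : ℝ) ≠ 0 := Nat.cast_ne_zero.mpr (h.c_pos (by omega) (by omega)).ne'
    have : u j = 0 := by simpa [hc] using hrec
    exact (ih (by omega)).elim (· this) (· hzero.1)

section Counting

variable {C : Finset V} {g : ℕ} (hCne : C.Nonempty)
include hCne

/-- Double counting of the pairs `(y, w)` with `x ~ y`, `w ∈ C` and `d(y, w) = i`. -/
theorem card_adj_distToSet_eq_mul (hx : distToSet G x C = i + 1)
    (hg : ∀ y, distToSet G y C = i → #{w ∈ C | G.dist y w = i} = g) :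
    #{y | G.Adj x y ∧ distToSet G y C = i} * g = #{w ∈ C | G.dist x w = i + 1} * c (i + 1) := by
  refine card_mul_eq_card_mul (fun y w => G.dist y w = i) (fun y hy => ?_) (fun w hw => ?_)
  · simp only [mem_filter, mem_univ, true_and] at hy
    rw [← hg y hy.2, bipartiteAbove, filter_filter]
    refine congrArg card (filter_congr fun w hw => ?_)
    have hstep := hy.1.diff_dist_adj (u := w)
    rw [G.dist_comm (u := w), G.dist_comm (u := w)] at hstep
    have := distToSet_le_dist (G := G) (x := x) hw
    omega
  · rw [mem_filter] at hw
    rw [← h.card_adj_dist_add_one_eq (z := w) (G.dist_comm.trans hw.2), bipartiteBelow,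
      filter_filter]
    refine congrArg card (filter_congr fun y _ => ?_)
    have := distToSet_le_dist (G := G) (x := y) hw.1
    rw [G.dist_comm (u := w)]
    constructor
    · rintro ⟨⟨hxy, -⟩, hyw⟩
      exact ⟨hxy, by omega⟩
    · rintro ⟨hxy, hyw⟩
      have := distToSet_le_of_adj h.connected hCne hxy.symm
      exact ⟨⟨hxy, by omega⟩, by omega⟩

/-- Double counting of the pairs `(y, w)` with `x ~ y`, `w ∈ C` and `d(y, w) = i + 2`. -/
theorem card_adj_distToSet_add_one_eq_mul (hC : G.IsClique (C : Set V))
    (hx : distToSet G x C = i)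
    (hg : ∀ y, distToSet G y C = i + 1 → #{w ∈ C | G.dist y w = i + 2} = g) :
    #{y | G.Adj x y ∧ distToSet G y C = i + 1} * g =
      #{w ∈ C | G.dist x w = i + 1} * b (i + 1) := by
  refine card_mul_eq_card_mul (fun y w => G.dist y w = i + 2) (fun y hy => ?_) (fun w hw => ?_)
  · simp only [mem_filter, mem_univ, true_and] at hy
    rw [← hg y hy.2, bipartiteAbove, filter_filter]
    refine congrArg card (filter_congr fun w hw => ?_)
    have hstep := hy.1.diff_dist_adj (u := w)
    rw [G.dist_comm (u := w), G.dist_comm (u := w)] at hstep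
    have := hC.dist_le_distToSet_add_one h.connected (x := x) hw
    omega
  · rw [mem_filter] at hw
    rw [← h.card_adj_dist_add_one (z := w) (G.dist_comm.trans hw.2), bipartiteBelow,
      filter_filter]
    refine congrArg card (filter_congr fun y _ => ?_)
    have := hC.dist_le_distToSet_add_one h.connected (x := y) hw.1
    rw [G.dist_comm (u := w)]
    constructor
    · rintro ⟨⟨hxy, -⟩, hyw⟩
      exact ⟨hxy, by omega⟩
    · rintro ⟨hxy, hyw⟩
      have := distToSet_le_of_adj h.connected hCne hxy
      exact ⟨⟨hxy, by omega⟩, by omega⟩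

end Counting

section CliqueCode

variable {C : Finset V} {x' : V} (hu : IsStdSeq D b c θ u) (hC : G.IsClique (C : Set V))
  (hCne : C.Nonempty) (hf : ∀ x, ∑ y ∈ C, u (G.dist x y) = 0)
include hu hC hCne hf

theorem stdSeq_ne_zero_of_distToSet_eq (hx : distToSet G x C = i) : u i ≠ 0 := by
  cases i with
  | zero => exact hu.1 ▸ one_ne_zero
  | succ m =>
    intro hum
    obtain ⟨z, -, hz⟩ := exists_adj_distToSet_eq h.connected hCne hx
    have hγ := hz ▸ card_filter_dist_distToSet_pos (G := G) hCne z
    have hid := hC.card_mul_add_card_mul_eq_zero h.connected (hf z) hz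
    rw [hum, mul_zero, add_zero] at hid
    obtain ⟨y, hy⟩ := hCne
    have hmD : m + 1 ≤ D := hx ▸ (distToSet_le_dist hy).trans (h.dist_le x y)
    exact (h.stdSeq_ne_zero_or_ne_zero hu hmD).elim
      (· ((mul_eq_zero.mp hid).resolve_left (Nat.cast_ne_zero.mpr hγ.ne'))) (· hum)

theorem card_filter_dist_add_one_pos (hx : distToSet G x C = i) :
    0 < #{y ∈ C | G.dist x y = i + 1} := by
  by_contra! hδ
  have hid := hC.card_mul_add_card_mul_eq_zero h.connected (hf x) hx
  rw [Nat.le_zero.mp hδ, Nat.cast_zero, zero_mul, add_zero] at hid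
  have hγ := hx ▸ card_filter_dist_distToSet_pos (G := G) hCne x
  exact h.stdSeq_ne_zero_of_distToSet_eq hu hC hCne hf hx
    ((mul_eq_zero.mp hid).resolve_left (Nat.cast_ne_zero.mpr hγ.ne'))

theorem distToSet_lt_diam (x : V) : distToSet G x C < D := by
  obtain ⟨y, hy⟩ := card_pos.mp (h.card_filter_dist_add_one_pos hu hC hCne hf rfl (x := x))
  have := h.dist_le x y
  rw [(mem_filter.mp hy).2] at this
  omega

theorem exists_distToSet_eq_diam_sub_one : ∃ x, distToSet G x C = D - 1 := by
  obtain ⟨y, hy⟩ := hCne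
  obtain ⟨x, hyx⟩ := h.exists_dist_eq y le_rfl
  have := hC.dist_le_distToSet_add_one h.connected (x := x) hy
  have := h.distToSet_lt_diam hu hC ⟨y, hy⟩ hf x
  rw [G.dist_comm] at hyx
  exact ⟨x, by omega⟩

/-- As `uᵢ ≠ uᵢ₊₁`, the identity `γ uᵢ + (|C| - γ) uᵢ₊₁ = 0` determines `γ`. -/
theorem card_filter_dist_eq_of_distToSet_eq (hx : distToSet G x C = i)
    (hx' : distToSet G x' C = i) :
    #{y ∈ C | G.dist x y = i} = #{y ∈ C | G.dist x' y = i} := by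
  have hid := hC.card_mul_add_card_mul_eq_zero h.connected (hf x) hx
  have hid' := hC.card_mul_add_card_mul_eq_zero h.connected (hf x') hx'
  have hsum := congrArg (Nat.cast : ℕ → ℝ)
    (hC.card_filter_dist_add_card_filter_dist h.connected hx)
  have hsum' := congrArg (Nat.cast : ℕ → ℝ)
    (hC.card_filter_dist_add_card_filter_dist h.connected hx')
  push_cast at hsum hsum'
  have hgap : u i - u (i + 1) ≠ 0 := by
    intro hgap
    have : (#C : ℝ) * u i = 0 := by
      linear_combination hid - u i * hsum + #{y ∈ C | G.dist x y = i + 1} * hgap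
    exact h.stdSeq_ne_zero_of_distToSet_eq hu hC hCne hf hx
      ((mul_eq_zero.mp this).resolve_left (Nat.cast_ne_zero.mpr (card_pos.mpr hCne).ne'))
  have key : ((#{y ∈ C | G.dist x y = i} : ℝ) - #{y ∈ C | G.dist x' y = i}) *
      (u i - u (i + 1)) = 0 := by
    linear_combination hid - hid' - u (i + 1) * hsum + u (i + 1) * hsum'
  exact_mod_cast sub_eq_zero.mp ((mul_eq_zero.mp key).resolve_right hgap)

theorem card_filter_dist_add_one_eq_of_distToSet_eq (hx : distToSet G x C = i)
    (hx' : distToSet G x' C = i) :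
    #{y ∈ C | G.dist x y = i + 1} = #{y ∈ C | G.dist x' y = i + 1} := by
  have := h.card_filter_dist_eq_of_distToSet_eq hu hC hCne hf hx hx'
  have := hC.card_filter_dist_add_card_filter_dist h.connected hx
  have := hC.card_filter_dist_add_card_filter_dist h.connected hx'
  omega

theorem card_adj_distToSet_eq_of_ne (hx : distToSet G x C = i) (hx' : distToSet G x' C = i)
    (hj : j ≠ i) :
    #{y | G.Adj x y ∧ distToSet G y C = j} = #{y | G.Adj x' y ∧ distToSet G y C = j} := by
  rcases (by omega : j + 1 = i ∨ j = i + 1 ∨ (j + 1 < i ∨ i + 1 < j)) with rfl | rfl | hfar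
  · obtain ⟨z, -, hz⟩ := exists_adj_distToSet_eq h.connected hCne hx
    have hg := fun y (hy : distToSet G y C = j) =>
      h.card_filter_dist_eq_of_distToSet_eq hu hC hCne hf hy hz
    have hpos := hz ▸ card_filter_dist_distToSet_pos (G := G) hCne z
    have e := h.card_adj_distToSet_eq_mul hCne hx hg
    rw [h.card_filter_dist_eq_of_distToSet_eq hu hC hCne hf hx hx'] at e
    exact Nat.eq_of_mul_eq_mul_right hpos (e.trans (h.card_adj_distToSet_eq_mul hCne hx' hg).symm)
  · by_cases hz : ∃ z, distToSet G z C = i + 1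
    · obtain ⟨z, hz⟩ := hz
      have hg := fun y (hy : distToSet G y C = i + 1) =>
        h.card_filter_dist_add_one_eq_of_distToSet_eq hu hC hCne hf hy hz
      have hpos := h.card_filter_dist_add_one_pos hu hC hCne hf hz
      have e := h.card_adj_distToSet_add_one_eq_mul hCne hC hx hg
      rw [h.card_filter_dist_add_one_eq_of_distToSet_eq hu hC hCne hf hx hx'] at e
      exact Nat.eq_of_mul_eq_mul_right hpos
        (e.trans (h.card_adj_distToSet_add_one_eq_mul hCne hC hx' hg).symm)
    · simp only [not_exists] at hz
      simp [hz]
  · rw [card_adj_distToSet_eq_zero h.connected hCne hx hfar,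
      card_adj_distToSet_eq_zero h.connected hCne hx' hfar]

theorem card_adj_distToSet_eq_of_distToSet_eq (hx : distToSet G x C = distToSet G x' C)
    (j : ℕ) :
    #{y | G.Adj x y ∧ distToSet G y C = j} = #{y | G.Adj x' y ∧ distToSet G y C = j} := by
  rcases ne_or_eq j (distToSet G x C) with hj | rfl
  · exact h.card_adj_distToSet_eq_of_ne hu hC hCne hf rfl hx.symm hj
  have degree : ∀ z, b 0 = ∑ l ∈ range D, #{y | G.Adj z y ∧ distToSet G y C = l} := by
    intro z
    rw [← h.card_adj (x := z), card_eq_sum_card_fiberwise (f := (distToSet G · C)) (t := range D)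
      (fun y _ => mem_range.mpr (h.distToSet_lt_diam hu hC hCne hf y))]
    simp only [filter_filter]
  have hj : distToSet G x C ∈ range D := mem_range.mpr (h.distToSet_lt_diam hu hC hCne hf x)
  have hdeg := degree x
  have hdeg' := degree x'
  rw [← add_sum_erase _ _ hj, sum_congr rfl fun l hl =>
    h.card_adj_distToSet_eq_of_ne hu hC hCne hf rfl hx.symm (ne_of_mem_erase hl)] at hdeg
  rw [← add_sum_erase _ _ hj] at hdeg'
  omega

theorem isCompletelyRegularCode : IsCompletelyRegularCode G C := by
  intro i j
  by_cases hi : ∃ x, distToSet G x C = i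
  · obtain ⟨x, hx⟩ := hi
    exact ⟨_, fun x' hx' =>
      h.card_adj_distToSet_eq_of_distToSet_eq hu hC hCne hf (hx'.trans hx.symm) j⟩
  · exact ⟨0, fun x hx => absurd ⟨x, hx⟩ hi⟩

end CliqueCode

end IsDRG

theorem stmt_2_general {V : Type*} [Fintype V] (G : SimpleGraph V) [DecidableRel G.Adj]
    (D : ℕ) (b c : ℕ → ℕ) (hDRG : IsDRG G D b c)
    (θmin : ℝ) (hθ : IsSmallestAdjEigenvalue G θmin)
    (hθval : θmin = -(b 0 : ℝ) / ((drgA b c 1 : ℝ) + 1))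
    (u : ℕ → ℝ) (hu : IsStdSeq D b c θmin u)
    (C : Finset V) (hCclique : G.IsClique (C : Set V)) (hCcard : C.card = drgA b c 1 + 2) :
    IsCompletelyRegularCode G C ∧
    ((∀ x : V, distToSet G x C ≤ D - 1) ∧ (∃ x : V, distToSet G x C = D - 1)) ∧
    ∀ i, i ≤ D - 1 → ∀ x : V, distToSet G x C = i →
      ((C.filter (fun y => G.dist x y = i)).card : ℝ) * u i +
        ((drgA b c 1 : ℝ) + 2 - ((C.filter (fun y => G.dist x y = i)).card : ℝ)) * u (i + 1)
          = 0 := by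
  classical
  obtain ⟨y, hy, y', hy', hne⟩ := one_lt_card.mp (by omega : 1 < #C)
  have hD : 0 < D :=
    (hDRG.connected.pos_dist_of_ne hne).trans_le (hDRG.dist_le y y')
  have hk : (b 0 : ℝ) ≠ 0 := Nat.cast_ne_zero.mpr (hDRG.b_pos hD).ne'
  have hf := hDRG.sum_stdSeq_eq_zero hD hθ.1 hu fun x hx => by
    rw [hCclique.sum_comp_dist_of_mem hx, hu.1, hu.2.1, hθval, hCcard]
    push_cast
    field_simp
    ring
  refine ⟨hDRG.isCompletelyRegularCode hu hCclique ⟨y, hy⟩ hf,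
    ⟨fun x => Nat.le_sub_one_of_lt (hDRG.distToSet_lt_diam hu hCclique ⟨y, hy⟩ hf x),
      hDRG.exists_distToSet_eq_diam_sub_one hu hCclique ⟨y, hy⟩ hf⟩, fun i _ x hx => ?_⟩
  have hsum := congrArg (Nat.cast : ℕ → ℝ)
    (hCclique.card_filter_dist_add_card_filter_dist hDRG.connected hx)
  rw [hCcard] at hsum
  push_cast at hsum
  rw [← hsum, add_sub_cancel_left]
  exact hCclique.card_mul_add_card_mul_eq_zero hDRG.connected (hf x) hx

/-- In a geometric distance-regular graph with smallest eigenvalue `θmin = -k/(a₁+1)`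
and standard sequence `u` associated with `θmin`, every clique `C` with `a₁ + 2` vertices
is a completely regular code with covering radius `D - 1`, and for every `0 ≤ i ≤ D-1` and
every vertex `x` with `d(x,C) = i`, writing `γ = |Γᵢ(x) ∩ C|`, one has
`γ * u i + (a₁ + 2 - γ) * u (i+1) = 0`. -/
theorem stmt_2 {V : Type*} [Fintype V] (G : SimpleGraph V) [DecidableRel G.Adj]
    (D : ℕ) (b c : ℕ → ℕ) (hDRG : IsDRG G D b c)
    (θmin : ℝ) (hθ : IsSmallestAdjEigenvalue G θmin)
    (hθval : θmin = -(b 0 : ℝ) / ((drgA b c 1 : ℝ) + 1))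
    (𝒞 : Set (Finset V)) (hgeo : IsGeometricWith G (b 0) θmin 𝒞)
    (u : ℕ → ℝ) (hu : IsStdSeq D b c θmin u)
    (C : Finset V) (hCclique : G.IsClique (C : Set V)) (hCcard : C.card = drgA b c 1 + 2) :
    IsCompletelyRegularCode G C ∧
    ((∀ x : V, distToSet G x C ≤ D - 1) ∧ (∃ x : V, distToSet G x C = D - 1)) ∧
    ∀ i, i ≤ D - 1 → ∀ x : V, distToSet G x C = i →
      ((C.filter (fun y => G.dist x y = i)).card : ℝ) * u i +
        ((drgA b c 1 : ℝ) + 2 - ((C.filter (fun y => G.dist x y = i)).card : ℝ)) * u (i + 1)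
          = 0 :=
  stmt_2_general G D b c hDRG θmin hθ hθval u hu C hCclique hCcard
end

section
/- Let Γ be a distance-regular graph with diameter D ≥ 2 and vertex set V, let θ ≠ k be an eigenvalue of Γ with standard sequence (u_i)_{i=0}^D, and let φ : V → ℝ^N be a map satisfying ⟨φ(x), φ(y)⟩ = u_{d(x,y)} for all vertices x, y. Fix 2 ≤ j ≤ D and vertices x, y with d(x,y) = j, and set F_j = φ(x) − φ(y) and C_j = Σ_{z ∈ Γ(x)∩Γ_{j−1}(y)} φ(z) − Σ_{w ∈ Γ_{j−1}(x)∩Γ(y)} φ(w). Then: (1) ⟨F_j, F_j⟩ = 2(u_0 − u_j); (2) ⟨C_j, F_j⟩ = 2 c_j (u_1 − u_{j−1}); (3) if moreover Γ is geometric with respect to a collection 𝒞 of Delsarte cliques and |Γ_{j−1}(v) ∩ C| = 1 for every C ∈ 𝒞 and every vertex v with d(v,C) = j−1, then ⟨C_j, C_j⟩ = 2 c_j ((u_0 + (c_j − 1) u_2) − (c_{j−1} u_{j−2} + (c_j − c_{j−1}) u_j)). -/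
open Finset

/-! For (1) and (2) the inner products expand into values of `u`, and both
`Γ(x) ∩ Γ_{j-1}(y)` and `Γ_{j-1}(x) ∩ Γ(y)` have `c_j` elements. For (3), the uniqueness
hypothesis on the cliques of `𝒞` makes `Γ(x) ∩ Γ_{j-1}(y)` a coclique, so its vertices are
pairwise at distance `2`, and it forbids distance `j - 1` between a vertex of
`Γ(x) ∩ Γ_{j-1}(y)` and one of `Γ_{j-1}(x) ∩ Γ(y)`. The remaining cross distances are `j - 2`,
attained by exactly `c_{j-1}` partners of each vertex, and `j`. -/

lemma Finset.sum_eq_card_filter_mul_add {ι : Type*} (s : Finset ι) (p : ι → Prop)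
    [DecidablePred p] {f : ι → ℝ} {a a' : ℝ} (ha : ∀ i ∈ s, p i → f i = a)
    (ha' : ∀ i ∈ s, ¬ p i → f i = a') :
    ∑ i ∈ s, f i = #(s.filter p) * a + (#s - #(s.filter p)) * a' := by
  rw [← sum_filter_add_sum_filter_not s p, sum_congr rfl (fun i hi => ha i (mem_filter.1 hi).1
    (mem_filter.1 hi).2), sum_congr rfl (fun i hi => ha' i (mem_filter.1 hi).1
    (mem_filter.1 hi).2), sum_const, sum_const, nsmul_eq_mul, nsmul_eq_mul,
    ← card_filter_add_card_filter_not (s := s) p]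
  push_cast
  ring

namespace SimpleGraph

variable {V : Type*} {G : SimpleGraph V}

lemma IsClique.dist_le_dist_add_one {s : Set V} (hs : G.IsClique s) {p q : V} (hp : p ∈ s)
    (hq : q ∈ s) (v : V) : G.dist v q ≤ G.dist v p + 1 := by
  obtain rfl | hpq := eq_or_ne p q
  · omega
  · have := (hs hp hq hpq).diff_dist_adj (u := v)
    omega

lemma Walk.dist_getVert_of_length_eq_dist {u v : V} (p : G.Walk u v)
    (hp : p.length = G.dist u v) {n : ℕ} (hn : n ≤ p.length) :
    G.dist u (p.getVert n) = n := by
  have h₁ : G.dist u (p.getVert n) ≤ n := by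
    simpa [Walk.take_length, hn] using dist_le (p.take n)
  have h₂ : G.dist (p.getVert n) v ≤ p.length - n := by
    simpa [Walk.drop_length] using dist_le (p.drop n)
  have h₃ := (p.take n).reachable.dist_triangle_left v
  omega

end SimpleGraph

open SimpleGraph

section DistToSet

variable {V : Type*} {G : SimpleGraph V}

lemma distToSet_eq {C : Finset V} {v a : V} {n : ℕ} (ha : a ∈ C) (hva : G.dist v a = n)
    (hle : ∀ q ∈ C, n ≤ G.dist v q) : distToSet G v C = n :=
  le_antisymm (Nat.sInf_le ⟨a, ha, hva⟩)
    (le_csInf ⟨n, a, ha, hva⟩ (by rintro _ ⟨q, hq, rfl⟩; exact hle q hq))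

lemma eq_of_dist_eq_of_forall_le_dist {𝒞 : Set (Finset V)} {n : ℕ}
    (hpsi : ∀ C ∈ 𝒞, ∀ v : V, distToSet G v C = n →
      (C.filter (fun w => G.dist v w = n)).card = 1)
    {C : Finset V} (hC : C ∈ 𝒞) {v a a' : V} (hle : ∀ q ∈ C, n ≤ G.dist v q)
    (ha : a ∈ C) (ha' : a' ∈ C) (hva : G.dist v a = n) (hva' : G.dist v a' = n) : a = a' :=
  card_le_one.1 (hpsi C hC v (distToSet_eq ha hva hle)).le a (mem_filter.2 ⟨ha, hva⟩)
    a' (mem_filter.2 ⟨ha', hva'⟩)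

end DistToSet

section DistanceRegular

variable {V : Type*} [Fintype V] {G : SimpleGraph V} [DecidableRel G.Adj]
  {D : ℕ} {b c : ℕ → ℕ}

noncomputable def nbrsAtDist (G : SimpleGraph V) [DecidableRel G.Adj] (x y : V) (n : ℕ) :
    Finset V :=
  univ.filter fun z => G.Adj x z ∧ G.dist y z = n

@[simp]
lemma mem_nbrsAtDist {x y z : V} {n : ℕ} :
    z ∈ nbrsAtDist G x y n ↔ G.Adj x z ∧ G.dist y z = n := by
  simp [nbrsAtDist]

lemma Cvec_eq {N : ℕ} (φ : V → EuclideanSpace ℝ (Fin N)) (j : ℕ) (x y : V) :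
    Cvec G φ j x y = ∑ z ∈ nbrsAtDist G x y (j - 1), φ z - ∑ w ∈ nbrsAtDist G y x (j - 1), φ w := by
  simp only [Cvec, nbrsAtDist, and_comm (a := G.dist x _ = j - 1)]

lemma IsDRG.card_nbrsAtDist (h : IsDRG G D b c) {i : ℕ} (hi : i ≤ D) {x y : V}
    (hxy : G.dist x y = i) : #(nbrsAtDist G x y (i - 1)) = c i :=
  (h.2.2.2.2.2 i hi y x (dist_comm.trans hxy)).1

lemma IsDRG.one_le_b (h : IsDRG G D b c) {i : ℕ} (hi : i < D) : 1 ≤ b i := by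
  obtain ⟨-, -, ⟨x, y, hxy⟩, -, -, hcount⟩ := h
  obtain ⟨p, hp⟩ :=
    (Reachable.of_dist_ne_zero (by omega : G.dist x y ≠ 0)).exists_walk_length_eq_dist
  have hdist {n : ℕ} (hn : n ≤ D) : G.dist x (p.getVert n) = n :=
    p.dist_getVert_of_length_eq_dist hp (by omega)
  rw [← (hcount i hi.le x (p.getVert i) (hdist hi.le)).2]
  exact card_pos.2 ⟨p.getVert (i + 1), by simp [p.adj_getVert_succ (i := i) (by omega), hdist hi]⟩

lemma IsDRG.exists_adj_dist_succ (h : IsDRG G D b c) {i : ℕ} (hi : i < D) {p a : V}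
    (hpa : G.dist p a = i) : ∃ a', G.Adj a a' ∧ G.dist p a' = i + 1 := by
  have hcard := (h.2.2.2.2.2 i hi.le p a hpa).2
  obtain ⟨a', ha'⟩ := card_pos.1 (hcard ▸ h.one_le_b hi)
  exact ⟨a', (mem_filter.1 ha').2⟩

lemma IsDRG.exists_dist_eq_of_le (h : IsDRG G D b c) {p x : V} {i n : ℕ}
    (hpx : G.dist p x = i) (hin : i ≤ n) (hnD : n ≤ D) :
    ∃ v, G.dist p v = n ∧ G.dist x v ≤ n - i := by
  induction n, hin using Nat.le_induction with
  | base => exact ⟨x, hpx, by simp⟩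
  | succ n hin ih =>
    obtain ⟨v, hpv, hxv⟩ := ih (by omega)
    obtain ⟨v', hvv', hpv'⟩ := h.exists_adj_dist_succ (by omega) hpv
    have := hvv'.diff_dist_adj (u := x)
    exact ⟨v', hpv', by omega⟩

lemma IsDRG.card_filter_nbrsAtDist_dist_eq_sub_two (h : IsDRG G D b c) {j : ℕ} {x y z : V}
    (hj2 : 2 ≤ j) (hjD : j ≤ D) (hxy : G.dist x y = j) (hz : z ∈ nbrsAtDist G x y (j - 1)) :
    #((nbrsAtDist G y x (j - 1)).filter fun w => G.dist z w = j - 2) = c (j - 1) := by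
  obtain ⟨hxz, hyz⟩ := mem_nbrsAtDist.1 hz
  have hset : (nbrsAtDist G y x (j - 1)).filter (fun w => G.dist z w = j - 2) =
      nbrsAtDist G y z (j - 1 - 1) := by
    ext w
    simp only [mem_filter, mem_nbrsAtDist]
    constructor
    · rintro ⟨⟨hyw, -⟩, hzw⟩
      exact ⟨hyw, by omega⟩
    · rintro ⟨hyw, hzw⟩
      have h₁ := hxz.symm.diff_dist_adj (u := w)
      have h₂ := hyw.symm.diff_dist_adj (u := x)
      rw [SimpleGraph.dist_comm (u := w) (v := x), SimpleGraph.dist_comm (u := w) (v := z)] at h₁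
      exact ⟨⟨hyw, by omega⟩, by omega⟩
  rw [hset, h.card_nbrsAtDist (by omega) hyz]

end DistanceRegular

section CliqueCover

variable {V : Type*} [Fintype V] {G : SimpleGraph V} [DecidableRel G.Adj] {D : ℕ}
  {b c : ℕ → ℕ} {𝒞 : Set (Finset V)} {j : ℕ} {x y : V}

lemma not_adj_of_mem_nbrsAtDist (h : IsDRG G D b c) (hjD : j ≤ D)
    (hcl : ∀ C ∈ 𝒞, G.IsClique (C : Set V))
    (hcover : ∀ a a' : V, G.Adj a a' → ∃ C ∈ 𝒞, a ∈ C ∧ a' ∈ C)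
    (hpsi : ∀ C ∈ 𝒞, ∀ v : V, distToSet G v C = j - 1 →
      (C.filter (fun w => G.dist v w = j - 1)).card = 1)
    (hxy : G.dist x y = j) {z z' : V} (hz : z ∈ nbrsAtDist G x y (j - 1))
    (hz' : z' ∈ nbrsAtDist G x y (j - 1)) (hne : z ≠ z') : ¬ G.Adj z z' := by
  intro hzz'
  obtain ⟨hxz, hyz⟩ := mem_nbrsAtDist.1 hz
  obtain ⟨hxz', hyz'⟩ := mem_nbrsAtDist.1 hz'
  obtain ⟨C, hC, hzC, hz'C⟩ := hcover z z' hzz'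
  by_cases hfar : ∀ q ∈ C, j - 1 ≤ G.dist y q
  · exact hne (eq_of_dist_eq_of_forall_le_dist hpsi hC hfar hzC hz'C hyz hyz')
  push Not at hfar
  obtain ⟨p, hpC, hyp⟩ := hfar
  -- `p` is at distance `2` from `x`; a vertex `v` with `d(p,v) = j` and `d(x,v) ≤ j - 2`
  -- then sees both `z` and `z'` at the minimal distance `j - 1` from `C`.
  have hpx : G.dist p x = 2 := by
    have h₁ := (hcl C hC).dist_le_dist_add_one hzC hpC x
    have h₂ : G.dist x y ≤ G.dist x p + G.dist p y := h.1.dist_triangle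
    rw [dist_eq_one_iff_adj.2 hxz] at h₁
    rw [SimpleGraph.dist_comm (u := p)] at h₂ ⊢
    omega
  obtain ⟨v, hpv, hxv⟩ := h.exists_dist_eq_of_le hpx (by omega) hjD
  rw [SimpleGraph.dist_comm] at hpv hxv
  have hlow : ∀ q ∈ C, j - 1 ≤ G.dist v q := fun q hq => by
    have := (hcl C hC).dist_le_dist_add_one hq hpC v
    omega
  have hnear : ∀ {w}, G.Adj x w → w ∈ C → G.dist v w = j - 1 := fun hxw hwC => by
    have := hxw.diff_dist_adj (u := v)
    have := hlow _ hwC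
    omega
  exact hne (eq_of_dist_eq_of_forall_le_dist hpsi hC hlow hzC hz'C (hnear hxz hzC)
    (hnear hxz' hz'C))

lemma dist_eq_two_of_mem_nbrsAtDist (h : IsDRG G D b c) (hjD : j ≤ D)
    (hcl : ∀ C ∈ 𝒞, G.IsClique (C : Set V))
    (hcover : ∀ a a' : V, G.Adj a a' → ∃ C ∈ 𝒞, a ∈ C ∧ a' ∈ C)
    (hpsi : ∀ C ∈ 𝒞, ∀ v : V, distToSet G v C = j - 1 →
      (C.filter (fun w => G.dist v w = j - 1)).card = 1)
    (hxy : G.dist x y = j) {z z' : V} (hz : z ∈ nbrsAtDist G x y (j - 1))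
    (hz' : z' ∈ nbrsAtDist G x y (j - 1)) (hne : z ≠ z') : G.dist z z' = 2 := by
  have h₁ := h.1.one_lt_dist_of_ne_of_not_adj hne
    (not_adj_of_mem_nbrsAtDist h hjD hcl hcover hpsi hxy hz hz' hne)
  have h₂ := (mem_nbrsAtDist.1 hz').1.diff_dist_adj (u := z)
  rw [SimpleGraph.dist_comm (u := z) (v := x), dist_eq_one_iff_adj.2 (mem_nbrsAtDist.1 hz).1]
    at h₂
  omega

lemma dist_ne_sub_one_of_mem_nbrsAtDist (hcl : ∀ C ∈ 𝒞, G.IsClique (C : Set V))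
    (hcover : ∀ a a' : V, G.Adj a a' → ∃ C ∈ 𝒞, a ∈ C ∧ a' ∈ C)
    (hpsi : ∀ C ∈ 𝒞, ∀ v : V, distToSet G v C = j - 1 →
      (C.filter (fun w => G.dist v w = j - 1)).card = 1)
    (hxy : G.dist x y = j) {z w : V} (hz : z ∈ nbrsAtDist G x y (j - 1))
    (hw : w ∈ nbrsAtDist G y x (j - 1)) : G.dist z w ≠ j - 1 := by
  obtain ⟨hxz, hyz⟩ := mem_nbrsAtDist.1 hz
  obtain ⟨hyw, hxw⟩ := mem_nbrsAtDist.1 hw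
  obtain ⟨C, hC, hxC, hzC⟩ := hcover x z hxz
  intro hzw
  rw [SimpleGraph.dist_comm] at hzw hxw
  -- `z` is the only vertex of `C` at distance `j - 1` from `y`, as `x ∈ C` is at distance `j`
  have hyC : ∀ q ∈ C, j - 1 ≤ G.dist y q := fun q hq => by
    have := (hcl C hC).dist_le_dist_add_one hq hxC y
    rw [SimpleGraph.dist_comm, hxy] at this
    omega
  by_cases hwC : ∀ q ∈ C, j - 1 ≤ G.dist w q
  · exact G.irrefl (eq_of_dist_eq_of_forall_le_dist hpsi hC hwC hxC hzC hxw hzw ▸ hxz)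
  push Not at hwC
  obtain ⟨q, hqC, hwq⟩ := hwC
  have h₁ := hyw.symm.diff_dist_adj (u := q)
  rw [SimpleGraph.dist_comm (u := q), SimpleGraph.dist_comm (u := q)] at h₁
  have hqz := eq_of_dist_eq_of_forall_le_dist hpsi hC hyC hqC hzC
    (le_antisymm (by omega) (hyC q hqC)) hyz
  subst hqz
  omega

lemma dist_eq_sub_two_or_eq_of_mem_nbrsAtDist (hcl : ∀ C ∈ 𝒞, G.IsClique (C : Set V))
    (hcover : ∀ a a' : V, G.Adj a a' → ∃ C ∈ 𝒞, a ∈ C ∧ a' ∈ C)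
    (hpsi : ∀ C ∈ 𝒞, ∀ v : V, distToSet G v C = j - 1 →
      (C.filter (fun w => G.dist v w = j - 1)).card = 1)
    (hj : 1 ≤ j) (hxy : G.dist x y = j) {z w : V} (hz : z ∈ nbrsAtDist G x y (j - 1))
    (hw : w ∈ nbrsAtDist G y x (j - 1)) : G.dist z w = j - 2 ∨ G.dist z w = j := by
  have hne := dist_ne_sub_one_of_mem_nbrsAtDist hcl hcover hpsi hxy hz hw
  obtain ⟨hxz, hyz⟩ := mem_nbrsAtDist.1 hz
  obtain ⟨hyw, hxw⟩ := mem_nbrsAtDist.1 hw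
  have h₁ := hxz.diff_dist_adj (u := w)
  have h₂ := hyw.symm.diff_dist_adj (u := z)
  rw [SimpleGraph.dist_comm (u := w) (v := z), SimpleGraph.dist_comm (u := w) (v := x)] at h₁
  rw [SimpleGraph.dist_comm (u := z) (v := y)] at h₂
  omega

end CliqueCover

section Representation

variable {V E : Type*} [NormedAddCommGroup E] [InnerProductSpace ℝ E] {G : SimpleGraph V}
  {φ : V → E} {u : ℕ → ℝ}

lemma inner_sum_sum_of_forall_sum_eq (hφ : ∀ x y, inner ℝ (φ x) (φ y) = u (G.dist x y))
    {S T : Finset V} {r : ℝ} (hr : ∀ z ∈ S, ∑ w ∈ T, u (G.dist z w) = r) :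
    inner ℝ (∑ z ∈ S, φ z) (∑ w ∈ T, φ w) = #S * r := by
  simp_rw [sum_inner, inner_sum, hφ]
  rw [sum_congr rfl hr, sum_const, nsmul_eq_mul]

lemma inner_sum_self_of_pairwise_dist_eq_two
    (hφ : ∀ x y, inner ℝ (φ x) (φ y) = u (G.dist x y)) {S : Finset V}
    (hS : ∀ z ∈ S, ∀ z' ∈ S, z ≠ z' → G.dist z z' = 2) :
    inner ℝ (∑ z ∈ S, φ z) (∑ z ∈ S, φ z) = #S * (u 0 + (#S - 1) * u 2) := by
  classical
  refine inner_sum_sum_of_forall_sum_eq hφ fun z hz => ?_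
  rw [sum_eq_card_filter_mul_add S (· = z) (a := u 0) (a' := u 2) (by rintro _ - rfl; simp)
    (fun w hw hwz => by rw [hS z hz w hw (Ne.symm hwz)]),
    card_eq_one.2 ⟨z, by ext; simp +contextual [hz]⟩]
  ring

lemma inner_sum_nbrsAtDist_sub [Fintype V] [DecidableRel G.Adj]
    (hφ : ∀ x y, inner ℝ (φ x) (φ y) = u (G.dist x y)) (x y : V) (n : ℕ) :
    inner ℝ (∑ z ∈ nbrsAtDist G x y n, φ z) (φ x - φ y) = #(nbrsAtDist G x y n) * (u 1 - u n) := by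
  rw [sum_inner, sum_congr rfl fun z hz => ?_, sum_const, nsmul_eq_mul]
  obtain ⟨hxz, hyz⟩ := mem_nbrsAtDist.1 hz
  rw [inner_sub_right, hφ, hφ, SimpleGraph.dist_comm, dist_eq_one_iff_adj.2 hxz,
    SimpleGraph.dist_comm, hyz]

end Representation

section InnerProducts

variable {V : Type*} [Fintype V] {G : SimpleGraph V} [DecidableRel G.Adj] {D : ℕ}
  {b c : ℕ → ℕ} {u : ℕ → ℝ} {N : ℕ} {φ : V → EuclideanSpace ℝ (Fin N)} {j : ℕ} {x y : V}

lemma inner_Cvec_sub (h : IsDRG G D b c) (hjD : j ≤ D)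
    (hφ : ∀ x y : V, inner ℝ (φ x) (φ y) = u (G.dist x y)) (hxy : G.dist x y = j) :
    inner ℝ (Cvec G φ j x y) (φ x - φ y) = 2 * (c j : ℝ) * (u 1 - u (j - 1)) := by
  rw [Cvec_eq, inner_sub_left, inner_sum_nbrsAtDist_sub hφ, ← neg_sub (φ y) (φ x),
    inner_neg_right, inner_sum_nbrsAtDist_sub hφ, h.card_nbrsAtDist hjD hxy,
    h.card_nbrsAtDist hjD (SimpleGraph.dist_comm.trans hxy)]
  ring

lemma inner_Cvec_self (h : IsDRG G D b c) (hj2 : 2 ≤ j) (hjD : j ≤ D) {𝒞 : Set (Finset V)}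
    (hcl : ∀ C ∈ 𝒞, G.IsClique (C : Set V))
    (hcover : ∀ a a' : V, G.Adj a a' → ∃ C ∈ 𝒞, a ∈ C ∧ a' ∈ C)
    (hpsi : ∀ C ∈ 𝒞, ∀ v : V, distToSet G v C = j - 1 →
      (C.filter (fun w => G.dist v w = j - 1)).card = 1)
    (hφ : ∀ x y : V, inner ℝ (φ x) (φ y) = u (G.dist x y)) (hxy : G.dist x y = j) :
    inner ℝ (Cvec G φ j x y) (Cvec G φ j x y) =
      2 * (c j : ℝ) * ((u 0 + ((c j : ℝ) - 1) * u 2) -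
        ((c (j - 1) : ℝ) * u (j - 2) + ((c j : ℝ) - (c (j - 1) : ℝ)) * u j)) := by
  have hyx : G.dist y x = j := SimpleGraph.dist_comm.trans hxy
  have hdiag {x y : V} (hxy : G.dist x y = j) :
      inner ℝ (∑ z ∈ nbrsAtDist G x y (j - 1), φ z) (∑ z ∈ nbrsAtDist G x y (j - 1), φ z) =
        c j * (u 0 + (c j - 1) * u 2) := by
    rw [inner_sum_self_of_pairwise_dist_eq_two hφ fun z hz z' hz' =>
      dist_eq_two_of_mem_nbrsAtDist h hjD hcl hcover hpsi hxy hz hz', h.card_nbrsAtDist hjD hxy]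
  have hcross :
      inner ℝ (∑ z ∈ nbrsAtDist G x y (j - 1), φ z) (∑ w ∈ nbrsAtDist G y x (j - 1), φ w) =
        c j * (c (j - 1) * u (j - 2) + (c j - c (j - 1)) * u j) := by
    rw [inner_sum_sum_of_forall_sum_eq hφ fun z hz => ?_, h.card_nbrsAtDist hjD hxy]
    rw [sum_eq_card_filter_mul_add _ (fun w => G.dist z w = j - 2) (fun w _ hw => by rw [hw])
      (fun w hw hw' => by
        rw [(dist_eq_sub_two_or_eq_of_mem_nbrsAtDist hcl hcover hpsi (by omega) hxy hz
          hw).resolve_left hw']),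
      h.card_filter_nbrsAtDist_dist_eq_sub_two hj2 hjD hxy hz, h.card_nbrsAtDist hjD hyx]
  rw [Cvec_eq, inner_sub_sub_self, hdiag hxy, hdiag hyx, hcross, real_inner_comm, hcross]
  ring

end InnerProducts

theorem stmt_8_general {V : Type*} [Fintype V] (G : SimpleGraph V) [DecidableRel G.Adj]
    (D : ℕ) (b c : ℕ → ℕ) (hDRG : IsDRG G D b c)
    (u : ℕ → ℝ)
    (N : ℕ) (φ : V → EuclideanSpace ℝ (Fin N))
    (hφ : ∀ x y : V, (inner ℝ (φ x) (φ y) : ℝ) = u (G.dist x y))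
    (j : ℕ) (hj2 : 2 ≤ j) (hjD : j ≤ D)
    (x y : V) (hxy : G.dist x y = j) :
    (inner ℝ (φ x - φ y) (φ x - φ y) : ℝ) = 2 * (u 0 - u j) ∧
    (inner ℝ (Cvec G φ j x y) (φ x - φ y) : ℝ) = 2 * (c j : ℝ) * (u 1 - u (j - 1)) ∧
    ∀ (θmin : ℝ) (𝒞 : Set (Finset V)), IsSmallestAdjEigenvalue G θmin →
      IsGeometricWith G (b 0) θmin 𝒞 →
      (∀ C ∈ 𝒞, ∀ v : V, distToSet G v C = j - 1 →
        (C.filter (fun w => G.dist v w = j - 1)).card = 1) →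
      (inner ℝ (Cvec G φ j x y) (Cvec G φ j x y) : ℝ) =
        2 * (c j : ℝ) *
          ((u 0 + ((c j : ℝ) - 1) * u 2) -
            ((c (j - 1) : ℝ) * u (j - 2) + ((c j : ℝ) - (c (j - 1) : ℝ)) * u j)) := by
  refine ⟨?_, inner_Cvec_sub hDRG hjD hφ hxy, fun _ _ _ hgeo hpsi => ?_⟩
  · rw [inner_sub_sub_self, hφ, hφ, hφ, hφ, dist_self, dist_self, SimpleGraph.dist_comm (u := y),
      hxy]
    ring
  · exact inner_Cvec_self hDRG hj2 hjD (fun C hC => (hgeo.1 C hC).1)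
      (fun a a' hadj => (hgeo.2 a a' hadj).exists) hpsi hφ hxy

/-- For a distance-regular graph with diameter `D ≥ 2`, an eigenvalue `θ ≠ k` with
standard sequence `u`, and a representation `φ` with `⟨φ x, φ y⟩ = u (d(x,y))`, for
`2 ≤ j ≤ D` and vertices `x, y` at distance `j`, with `F_j = φ x - φ y` and
`C_j = Σ_{z ∈ Γ(x) ∩ Γ_{j-1}(y)} φ z - Σ_{w ∈ Γ_{j-1}(x) ∩ Γ(y)} φ w`:
(1) `⟨F_j, F_j⟩ = 2 (u 0 - u j)`; (2) `⟨C_j, F_j⟩ = 2 c_j (u 1 - u (j-1))`;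
(3) if moreover `G` is geometric w.r.t. `𝒞` and `|Γ_{j-1}(v) ∩ C| = 1` for every `C ∈ 𝒞`
and vertex `v` with `d(v,C) = j - 1`, then
`⟨C_j, C_j⟩ = 2 c_j ((u 0 + (c_j - 1) u 2) - (c_{j-1} u (j-2) + (c_j - c_{j-1}) u j))`. -/
theorem stmt_8 {V : Type*} [Fintype V] (G : SimpleGraph V) [DecidableRel G.Adj]
    (D : ℕ) (b c : ℕ → ℕ) (hDRG : IsDRG G D b c) (hD : 2 ≤ D)
    (θ : ℝ) (hθk : θ ≠ (b 0 : ℝ)) (hθ : IsAdjEigenvalue G θ)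
    (u : ℕ → ℝ) (hu : IsStdSeq D b c θ u)
    (N : ℕ) (φ : V → EuclideanSpace ℝ (Fin N))
    (hφ : ∀ x y : V, (inner ℝ (φ x) (φ y) : ℝ) = u (G.dist x y))
    (j : ℕ) (hj2 : 2 ≤ j) (hjD : j ≤ D)
    (x y : V) (hxy : G.dist x y = j) :
    (inner ℝ (φ x - φ y) (φ x - φ y) : ℝ) = 2 * (u 0 - u j) ∧
    (inner ℝ (Cvec G φ j x y) (φ x - φ y) : ℝ) = 2 * (c j : ℝ) * (u 1 - u (j - 1)) ∧
    ∀ (θmin : ℝ) (𝒞 : Set (Finset V)), IsSmallestAdjEigenvalue G θmin →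
      IsGeometricWith G (b 0) θmin 𝒞 →
      (∀ C ∈ 𝒞, ∀ v : V, distToSet G v C = j - 1 →
        (C.filter (fun w => G.dist v w = j - 1)).card = 1) →
      (inner ℝ (Cvec G φ j x y) (Cvec G φ j x y) : ℝ) =
        2 * (c j : ℝ) *
          ((u 0 + ((c j : ℝ) - 1) * u 2) -
            ((c (j - 1) : ℝ) * u (j - 2) + ((c j : ℝ) - (c (j - 1) : ℝ)) * u j)) :=
  stmt_8_general G D b c hDRG u N φ hφ j hj2 hjD x y hxy
end

section
/- Let Γ be a non-bipartite distance-regular graph with diameter D ≥ 4 and vertex set V, let θ ≠ k be an eigenvalue of Γ with standard sequence (u_i)_{i=0}^D, and let φ : V → ℝ^N satisfy ⟨φ(x), φ(y)⟩ = u_{d(x,y)} for all vertices x, y. Fix 3 ≤ j ≤ D−1 and suppose that for all vertices x, y with d(x,y) = j the vectors F_j = φ(x) − φ(y) and C_j = Σ_{z ∈ Γ(x)∩Γ_{j−1}(y)} φ(z) − Σ_{w ∈ Γ_{j−1}(x)∩Γ(y)} φ(w) satisfy ⟨C_j, C_j⟩⟨F_j, F_j⟩ = ⟨C_j, F_j⟩².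 Then for all j ≤ i ≤ D−1: (u_0 − u_j)(u_i − u_{i−j+2}) = (u_1 − u_{j−1})(u_{i+1} − u_{i−j+1}). -/
open Finset

/-! Choose a geodesic `p … y … x` with `d(p, y) = i + 1 - j` and `d(y, x) = j`. Equality in
Cauchy–Schwarz makes `C_j` and `F_j = φ x - φ y` parallel: `⟪F, F⟫ • C = ⟪C, F⟫ • F`. Pairing
with `φ p` and evaluating each inner product by distance regularity (the summands of `C_j` lie
at distance `i`, resp. `i - j + 2`, from `p`) gives
`2 (u 0 - u j) c_j (u i - u (i-j+2)) = 2 c_j (u 1 - u (j-1)) (u (i+1) - u (i-j+1))`,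
and `c_j > 0`. -/

open scoped RealInnerProductSpace

namespace SimpleGraph

variable {V : Type*} {G : SimpleGraph V}

lemma Connected.exists_dist_eq_of_le_dist (hG : G.Connected) {p x : V} {k : ℕ}
    (hk : k ≤ G.dist p x) : ∃ y, G.dist p y = k ∧ G.dist y x = G.dist p x - k := by
  obtain ⟨w, hw⟩ := hG.exists_walk_length_eq_dist p x
  have hpy := dist_le (w.take k)
  have hyx := dist_le (w.drop k)
  rw [Walk.take_length] at hpy
  rw [Walk.drop_length] at hyx
  have := hG.dist_triangle (u := p) (v := w.getVert k) (w := x)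
  exact ⟨w.getVert k, by omega, by omega⟩

variable {p x y z : V}

lemma Connected.dist_add_one_eq_of_geodesic_of_adj_left (hG : G.Connected)
    (hpyx : G.dist p y + G.dist y x = G.dist p x) (hxz : G.Adj x z)
    (hyz : G.dist y z + 1 = G.dist y x) : G.dist p z + 1 = G.dist p x := by
  have := hG.dist_triangle (u := p) (v := y) (w := z)
  have := hG.dist_triangle (u := p) (v := z) (w := x)
  have := dist_eq_one_iff_adj.mpr hxz.symm
  omega

lemma Connected.dist_eq_add_one_of_geodesic_of_adj_right (hG : G.Connected)
    (hpyx : G.dist p y + G.dist y x = G.dist p x) (hyz : G.Adj y z)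
    (hzx : G.dist z x + 1 = G.dist y x) : G.dist p z = G.dist p y + 1 := by
  have := hG.dist_triangle (u := p) (v := y) (w := z)
  have := hG.dist_triangle (u := p) (v := z) (w := x)
  have := dist_eq_one_iff_adj.mpr hyz
  omega

end SimpleGraph

open SimpleGraph

section DistanceRegular

variable {V : Type*} [Fintype V] {G : SimpleGraph V} [DecidableRel G.Adj] {D : ℕ} {b c : ℕ → ℕ}

lemma IsDRG.exists_geodesic (hG : IsDRG G D b c) {m n : ℕ} (hmn : m + n ≤ D) :
    ∃ p y x : V, G.dist p y = m ∧ G.dist y x = n ∧ G.dist p x = m + n := by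
  obtain ⟨hconn, -, ⟨p, q, hpq⟩, -⟩ := hG
  obtain ⟨x, hpx, -⟩ := hconn.exists_dist_eq_of_le_dist (p := p) (x := q) (k := m + n) (by omega)
  obtain ⟨y, hpy, hyx⟩ := hconn.exists_dist_eq_of_le_dist (p := p) (x := x) (k := m) (by omega)
  exact ⟨p, y, x, hpy, by omega, hpx⟩

lemma IsDRG.card_adj_dist_pred (hG : IsDRG G D b c) {x y : V} {j : ℕ} (hjD : j ≤ D)
    (hxy : G.dist x y = j) :
    (univ.filter fun z => G.Adj x z ∧ G.dist y z = j - 1).card = c j := by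
  rw [G.dist_comm] at hxy
  exact (hG.2.2.2.2.2 j hjD y x hxy).1

lemma IsDRG.c_pos_s9 (hG : IsDRG G D b c) {j : ℕ} (hj : 1 ≤ j) (hjD : j ≤ D) : 0 < c j := by
  obtain ⟨-, y, x, -, hyx, -⟩ := hG.exists_geodesic (m := 0) (n := j) (by omega)
  obtain ⟨z, hyz, hzx⟩ := hG.1.exists_dist_eq_of_le_dist (p := y) (x := x) (k := j - 1) (by omega)
  have hxz : G.Adj x z := by rw [← dist_eq_one_iff_adj, G.dist_comm]; omega
  rw [← hG.card_adj_dist_pred hjD (x := x) (y := y) (by rw [G.dist_comm, hyx])]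
  exact card_pos.mpr ⟨z, by simp [hxz, hyz]⟩

end DistanceRegular

lemma inner_self_smul_eq_inner_smul_of_inner_sq_eq {E : Type*} [NormedAddCommGroup E]
    [InnerProductSpace ℝ E] {v w : E} (h : ⟪v, v⟫ * ⟪w, w⟫ = ⟪v, w⟫ ^ 2) :
    ⟪w, w⟫ • v = ⟪v, w⟫ • w := by
  -- `‖⟪w, w⟫ v - ⟪v, w⟫ w‖² = ⟪w, w⟫ (⟪v, v⟫ ⟪w, w⟫ - ⟪v, w⟫²)`
  rw [← sub_eq_zero, ← inner_self_eq_zero (𝕜 := ℝ)]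
  simp only [inner_sub_left, inner_sub_right, real_inner_smul_left, real_inner_smul_right,
    real_inner_comm v w]
  linear_combination ⟪w, w⟫ * h

section Representation

variable {V : Type*} [Fintype V] {G : SimpleGraph V} [DecidableRel G.Adj] {D : ℕ} {b c : ℕ → ℕ}
  {u : ℕ → ℝ} {N : ℕ} {φ : V → EuclideanSpace ℝ (Fin N)} {j : ℕ} {x y : V}

lemma inner_Cvec_eq_of_dist_eq (hG : IsDRG G D b c)
    (hφ : ∀ x y : V, ⟪φ x, φ y⟫ = u (G.dist x y)) (hjD : j ≤ D) (hxy : G.dist x y = j) (q : V)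
    {d₁ d₂ : ℕ} (h₁ : ∀ z, G.Adj x z → G.dist y z = j - 1 → G.dist z q = d₁)
    (h₂ : ∀ w, G.dist x w = j - 1 → G.Adj y w → G.dist w q = d₂) :
    ⟪Cvec G φ j x y, φ q⟫ = c j * (u d₁ - u d₂) := by
  have hcard₁ := hG.card_adj_dist_pred hjD hxy
  have hcard₂ : (univ.filter fun w => G.dist x w = j - 1 ∧ G.Adj y w).card = c j := by
    simpa only [and_comm] using
      hG.card_adj_dist_pred hjD (x := y) (y := x) (by rw [G.dist_comm, hxy])
  rw [Cvec, inner_sub_left, sum_inner, sum_inner,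
    sum_eq_card_nsmul fun z hz => by rw [hφ, h₁ z (mem_filter.mp hz).2.1 (mem_filter.mp hz).2.2],
    sum_eq_card_nsmul fun w hw => by rw [hφ, h₂ w (mem_filter.mp hw).2.1 (mem_filter.mp hw).2.2],
    hcard₁, hcard₂, nsmul_eq_mul, nsmul_eq_mul]
  ring

lemma inner_Cvec_sub_eq (hG : IsDRG G D b c) (hφ : ∀ x y : V, ⟪φ x, φ y⟫ = u (G.dist x y))
    (hjD : j ≤ D) (hxy : G.dist x y = j) :
    ⟪Cvec G φ j x y, φ x - φ y⟫ = 2 * c j * (u 1 - u (j - 1)) := by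
  have hCx := inner_Cvec_eq_of_dist_eq hG hφ hjD hxy x
    (fun z hxz _ => by rw [G.dist_comm, dist_eq_one_iff_adj.mpr hxz])
    (fun w hxw _ => by rw [G.dist_comm, hxw])
  have hCy := inner_Cvec_eq_of_dist_eq hG hφ hjD hxy y
    (fun z _ hyz => by rw [G.dist_comm, hyz])
    (fun w _ hyw => by rw [G.dist_comm, dist_eq_one_iff_adj.mpr hyw])
  rw [inner_sub_right, hCx, hCy]
  ring

lemma inner_Cvec_eq_of_geodesic (hG : IsDRG G D b c)
    (hφ : ∀ x y : V, ⟪φ x, φ y⟫ = u (G.dist x y)) (hj : 1 ≤ j) (hjD : j ≤ D)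
    (hxy : G.dist x y = j) {p : V} (hpyx : G.dist p y + G.dist y x = G.dist p x) :
    ⟪Cvec G φ j x y, φ p⟫ = c j * (u (G.dist p x - 1) - u (G.dist p y + 1)) := by
  have hyx : G.dist y x = j := by rw [G.dist_comm, hxy]
  refine inner_Cvec_eq_of_dist_eq hG hφ hjD hxy p (fun z hxz hyz => ?_) (fun w hxw hyw => ?_)
  · have := hG.1.dist_add_one_eq_of_geodesic_of_adj_left hpyx hxz (by omega)
    rw [G.dist_comm]; omega
  · have := hG.1.dist_eq_add_one_of_geodesic_of_adj_right hpyx hyw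
      (by rw [G.dist_comm, hxw]; omega)
    rw [G.dist_comm, this]

end Representation

theorem stmt_9_general {V : Type*} [Fintype V] (G : SimpleGraph V) [DecidableRel G.Adj]
    (D : ℕ) (b c : ℕ → ℕ) (hDRG : IsDRG G D b c)
    (u : ℕ → ℝ)
    (N : ℕ) (φ : V → EuclideanSpace ℝ (Fin N))
    (hφ : ∀ x y : V, (inner ℝ (φ x) (φ y) : ℝ) = u (G.dist x y))
    (j : ℕ) (hj3 : 3 ≤ j) (hjD : j ≤ D - 1)
    (hS : ∀ x y : V, G.dist x y = j →
      (inner ℝ (Cvec G φ j x y) (Cvec G φ j x y) : ℝ) *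
          (inner ℝ (φ x - φ y) (φ x - φ y) : ℝ) =
        (inner ℝ (Cvec G φ j x y) (φ x - φ y) : ℝ) ^ 2) :
    ∀ i, j ≤ i → i ≤ D - 1 →
      (u 0 - u j) * (u i - u (i - j + 2)) =
        (u 1 - u (j - 1)) * (u (i + 1) - u (i - j + 1)) := by
  intro i hji hiD
  obtain ⟨p, y, x, hpy, hyx, hpx⟩ := hDRG.exists_geodesic (m := i + 1 - j) (n := j) (by omega)
  have hxy : G.dist x y = j := by rw [G.dist_comm, hyx]
  have hCp : ⟪Cvec G φ j x y, φ p⟫ = c j * (u i - u (i - j + 2)) := by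
    rw [inner_Cvec_eq_of_geodesic hDRG hφ (by omega) (by omega) hxy (by omega), hpx, hpy]
    congr 3 <;> omega
  have hFF : ⟪φ x - φ y, φ x - φ y⟫ = 2 * (u 0 - u j) := by
    simp only [inner_sub_left, inner_sub_right, hφ, dist_self, hxy, hyx]; ring
  have hFp : ⟪φ x - φ y, φ p⟫ = u (i + 1) - u (i - j + 1) := by
    have hyp : G.dist y p = i - j + 1 := by rw [G.dist_comm]; omega
    rw [inner_sub_left, hφ, hφ, hyp, G.dist_comm, hpx]; congr 2; omega
  have key := congrArg (⟪·, φ p⟫) (inner_self_smul_eq_inner_smul_of_inner_sq_eq (hS x y hxy))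
  simp only [real_inner_smul_left, hFF, inner_Cvec_sub_eq hDRG hφ (by omega) hxy, hCp, hFp] at key
  have hc : (2 * c j : ℝ) ≠ 0 := by
    have := hDRG.c_pos_s9 (j := j) (by omega) (by omega)
    positivity
  exact mul_left_cancel₀ hc (by linear_combination key)

/-- For a non-bipartite distance-regular graph with diameter `D ≥ 4`, an eigenvalue
`θ ≠ k` with standard sequence `u`, and a representation `φ` with
`⟨φ x, φ y⟩ = u (d(x,y))`: if for some `3 ≤ j ≤ D - 1` all pairs `x, y` at distance `j`
satisfy `⟨C_j, C_j⟩ ⟨F_j, F_j⟩ = ⟨C_j, F_j⟩²`, then for all `j ≤ i ≤ D - 1`: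
`(u 0 - u j)(u i - u (i-j+2)) = (u 1 - u (j-1))(u (i+1) - u (i-j+1))`. -/
theorem stmt_9 {V : Type*} [Fintype V] (G : SimpleGraph V) [DecidableRel G.Adj]
    (D : ℕ) (b c : ℕ → ℕ) (hDRG : IsDRG G D b c) (hD : 4 ≤ D)
    (hnb : NonBipartite G)
    (θ : ℝ) (hθk : θ ≠ (b 0 : ℝ)) (hθ : IsAdjEigenvalue G θ)
    (u : ℕ → ℝ) (hu : IsStdSeq D b c θ u)
    (N : ℕ) (φ : V → EuclideanSpace ℝ (Fin N))
    (hφ : ∀ x y : V, (inner ℝ (φ x) (φ y) : ℝ) = u (G.dist x y))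
    (j : ℕ) (hj3 : 3 ≤ j) (hjD : j ≤ D - 1)
    (hS : ∀ x y : V, G.dist x y = j →
      (inner ℝ (Cvec G φ j x y) (Cvec G φ j x y) : ℝ) *
          (inner ℝ (φ x - φ y) (φ x - φ y) : ℝ) =
        (inner ℝ (Cvec G φ j x y) (φ x - φ y) : ℝ) ^ 2) :
    ∀ i, j ≤ i → i ≤ D - 1 →
      (u 0 - u j) * (u i - u (i - j + 2)) =
        (u 1 - u (j - 1)) * (u (i + 1) - u (i - j + 1)) :=
  stmt_9_general G D b c hDRG u N φ hφ j hj3 hjD hS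
end
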